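/- arXiv:2211.11732 — 3 statements merged into one kernel-verified Lean document; each statement's English description precedes it below -/
import Mathlib

section
/- Let n₁,...,n_m be positive integers, d = Σᵢ nᵢ², sᵢ = Σ_{j<i} nⱼ², and ω = exp(2πi/d). Define U = ⊕ᵢ ω^{sᵢ} I_{nᵢ} ⊗ Dᵢ with Dᵢ = diag(1, ω^{nᵢ}, ω^{2nᵢ}, ..., ω^{(nᵢ-1)nᵢ}), and V = ⊕ᵢ I_{nᵢ} ⊗ Cᵢ with Cᵢ a circulant unitary with eigenvalues 1, ω, ..., ω^{nᵢ-1}. Then for any integer r not divisible by d, tr(U^r V^r) = 0. -/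
/-!
`U` is diagonal and `V = P Δ P*` with `P = ⊕ᵢ I ⊗ F_{nᵢ}` unitary and `Δ` diagonal, so both
`U ^ r` and `V ^ r` are obtained by raising diagonal entries to the `r`-th power. Every entry of
`F_n` has modulus `1/√n`, hence each diagonal entry of `Cᵢ ^ r` is the average
`(1/nᵢ) ∑_{q<nᵢ} ζ^q` of powers of `ζ = ω ^ r`. Block `i` of the trace therefore contributes
`∑_{t<nᵢ²} ζ^(sᵢ+t)`; these ranges tile `[0, d)`, and the resulting geometric sum
`∑_{t<d} ζ^t` vanishes because `ζ` is a `d`-th root of unity different from `1`.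
-/

open Matrix Kronecker Finset

/-- The `n × n` Fourier (DFT) matrix `(F_n)_{jk} = exp(2πi jk/n)/√n`. -/
noncomputable def FourierMatrix (n : ℕ) : Matrix (Fin n) (Fin n) ℂ :=
  Matrix.of fun j k =>
    Complex.exp (2 * Real.pi * Complex.I * (j : ℕ) * (k : ℕ) / n) / Real.sqrt n

theorem geom_sum_eq_zero_of_pow_eq_one {R : Type*} [Ring R] [NoZeroDivisors R] {z : R} {k : ℕ}
    (hz : z ^ k = 1) (hz1 : z ≠ 1) : ∑ i ∈ range k, z ^ i = 0 := by
  have h := geom_sum_mul z k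
  rw [hz, sub_self] at h
  exact (mul_eq_zero.1 h).resolve_right (sub_ne_zero.2 hz1)

theorem sum_range_pow_exp_zpow_eq_zero {k : ℕ} {a : ℤ} (ha : ¬ (k : ℤ) ∣ a) :
    ∑ t ∈ range k, (Complex.exp (2 * Real.pi * Complex.I / k) ^ a) ^ t = 0 := by
  rcases eq_or_ne k 0 with rfl | hk
  · simp
  have hprim := Complex.isPrimitiveRoot_exp k hk
  refine geom_sum_eq_zero_of_pow_eq_one ?_ fun h => ha ((hprim.zpow_eq_one_iff_dvd a).1 h)
  rw [← zpow_natCast, zpow_comm, zpow_natCast, hprim.pow_eq_one, _root_.one_zpow]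

theorem Fin.sum_filter_lt_eq_sum_castLE {M : Type*} [AddCommMonoid M] {m : ℕ} (f : Fin m → M)
    (i : Fin m) : ∑ j ∈ univ.filter (· < i), f j = ∑ j : Fin i, f (Fin.castLE i.2.le j) := by
  have h : univ.filter (· < i) = univ.map (Fin.castLEEmb i.2.le) := by
    ext j
    simp only [mem_filter, mem_univ, true_and, mem_map, Fin.coe_castLEEmb]
    exact ⟨fun hj => ⟨⟨j, hj⟩, rfl⟩, fun ⟨a, ha⟩ => ha ▸ a.2⟩
  rw [h, sum_map]
  rfl

theorem sum_sum_range_add_partial_sum {M : Type*} [AddCommMonoid M] {m : ℕ} (n : Fin m → ℕ)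
    (f : ℕ → M) :
    ∑ i, ∑ t ∈ range (n i), f (∑ j ∈ univ.filter (· < i), n j + t) =
      ∑ t ∈ range (∑ i, n i), f t := by
  rw [← Fin.sum_univ_eq_sum_range, ← finSigmaFinEquiv.sum_comp, Fintype.sum_sigma]
  refine sum_congr rfl fun i _ => ?_
  rw [← Fin.sum_univ_eq_sum_range]
  simp [finSigmaFinEquiv_apply, Fin.sum_filter_lt_eq_sum_castLE]

theorem sum_fin_sum_fin_pow_mul_geom_sum_div {K : Type*} [Field K] [CharZero K] (ζ : K)
    (s n : ℕ) :
    ∑ _x : Fin n, ∑ y : Fin n, ζ ^ (s + y * n) * ((∑ q : Fin n, ζ ^ (q : ℕ)) / n) =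
      ∑ t ∈ range (n ^ 2), ζ ^ (s + t) := by
  rcases eq_or_ne n 0 with rfl | hn
  · simp
  have hprod : ∑ p : Fin n × Fin n, ζ ^ (s + (p.2 + n * p.1 : ℕ)) =
      ∑ t ∈ range (n ^ 2), ζ ^ (s + t) := by
    rw [sq, ← Fin.sum_univ_eq_sum_range (fun t => ζ ^ (s + t)), ← finProdFinEquiv.sum_comp]
    rfl
  rw [← hprod, sum_const, card_univ, Fintype.card_fin, nsmul_eq_mul, Fintype.sum_prod_type,
    mul_sum]
  refine sum_congr rfl fun y _ => ?_
  rw [mul_left_comm, mul_div_cancel₀ _ (Nat.cast_ne_zero.2 hn), mul_sum]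
  refine sum_congr rfl fun q _ => ?_
  rw [← pow_add]
  ring_nf

theorem FourierMatrix_apply_mul_star {k : ℕ} (j l q : Fin k) :
    FourierMatrix k j q * star (FourierMatrix k l q) =
      (Complex.exp (2 * Real.pi * Complex.I / k) ^ ((j : ℤ) - l)) ^ (q : ℕ) / k := by
  have hsqrt : (Real.sqrt k : ℂ) * Real.sqrt k = k := by
    rw [← Complex.ofReal_mul, Real.mul_self_sqrt k.cast_nonneg, Complex.ofReal_natCast]
  simp only [FourierMatrix, of_apply, star_div₀, Complex.star_def, ← Complex.exp_conj,
    Complex.conj_ofReal]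
  rw [div_mul_div_comm, ← Complex.exp_add, hsqrt, ← Complex.exp_int_mul, ← Complex.exp_nat_mul]
  congr 2
  simp only [map_div₀, map_mul, Complex.conj_I, Complex.conj_ofReal, map_ofNat, map_natCast]
  push_cast
  ring

theorem FourierMatrix_mul_conjTranspose (k : ℕ) : FourierMatrix k * (FourierMatrix k)ᴴ = 1 := by
  ext j l
  simp only [mul_apply, conjTranspose_apply, FourierMatrix_apply_mul_star, ← sum_div]
  rw [Fin.sum_univ_eq_sum_range (fun t : ℕ => (_ : ℂ) ^ t)]
  obtain rfl | hjl := eq_or_ne j l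
  · simp [j.pos.ne']
  have hdvd : ¬ (k : ℤ) ∣ (j : ℤ) - l := fun h => hjl <| Fin.ext <| by
    have := Int.eq_zero_of_abs_lt_dvd h (abs_sub_lt_iff.2 ⟨by omega, by omega⟩)
    omega
  rw [sum_range_pow_exp_zpow_eq_zero hdvd, zero_div, one_apply_ne hjl]

theorem FourierMatrix_mul_diagonal_mul_conjTranspose_apply_self {k : ℕ} (w : Fin k → ℂ)
    (y : Fin k) :
    (FourierMatrix k * diagonal w * (FourierMatrix k)ᴴ) y y = (∑ q, w q) / k := by
  rw [mul_apply, sum_div]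
  refine sum_congr rfl fun q _ => ?_
  rw [mul_diagonal, conjTranspose_apply, mul_right_comm, FourierMatrix_apply_mul_star, sub_self,
    zpow_zero, one_pow, one_div_mul_eq_div]

namespace Matrix

theorem diagonal_zpow {ι K : Type*} [Fintype ι] [DecidableEq ι] [Field K] (v : ι → K)
    (hv : ∀ i, v i ≠ 0) (r : ℤ) : diagonal v ^ r = diagonal fun i => v i ^ r := by
  obtain ⟨k, rfl | rfl⟩ := r.eq_nat_or_neg
  · simp [diagonal_pow]
  · simp only [zpow_neg_natCast, diagonal_pow]
    refine inv_eq_left_inv ?_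
    rw [diagonal_mul_diagonal, ← diagonal_one]
    congr 1
    ext i
    simp [hv i]

theorem conj_zpow_of_mul_eq_one {ι R : Type*} [Fintype ι] [DecidableEq ι] [CommRing R]
    {P Q : Matrix ι ι R} (hPQ : P * Q = 1) (A : Matrix ι ι R) (r : ℤ) :
    (P * A * Q) ^ r = P * A ^ r * Q := by
  obtain rfl : P⁻¹ = Q := inv_eq_right_inv hPQ
  have hP : IsUnit P.det := isUnit_det_of_right_inverse hPQ
  have hpow : ∀ k : ℕ, (P * A * P⁻¹) ^ k = P * A ^ k * P⁻¹ := by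
    intro k
    induction k with
    | zero => simpa using hPQ.symm
    | succ k ih =>
      rw [pow_succ, ih, pow_succ]
      simp only [Matrix.mul_assoc, nonsing_inv_mul_cancel_left _ _ hP]
  obtain ⟨k, rfl | rfl⟩ := r.eq_nat_or_neg
  · simpa using hpow k
  · rw [zpow_neg_natCast, zpow_neg_natCast, hpow, mul_inv_rev, mul_inv_rev,
      nonsing_inv_nonsing_inv _ hP, Matrix.mul_assoc]

section blockOneKronecker

variable {ι : Type*} [DecidableEq ι] {κ : ι → Type*} [∀ i, DecidableEq (κ i)]

def blockOneKronecker {R : Type*} [CommSemiring R] (A : ∀ i, Matrix (κ i) (κ i) R) :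
    Matrix (Σ i, κ i × κ i) (Σ i, κ i × κ i) R :=
  blockDiagonal' fun i => (1 : Matrix (κ i) (κ i) R) ⊗ₖ A i

variable {R : Type*} [CommSemiring R]

@[simp]
theorem blockOneKronecker_apply_self (A : ∀ i, Matrix (κ i) (κ i) R) (a : Σ i, κ i × κ i) :
    blockOneKronecker A a a = A a.1 a.2.2 a.2.2 := by
  obtain ⟨i, x, y⟩ := a
  simp [blockOneKronecker]

theorem blockOneKronecker_one : blockOneKronecker (fun i => (1 : Matrix (κ i) (κ i) R)) = 1 := by
  simp only [blockOneKronecker, one_kronecker_one]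
  exact blockDiagonal'_one

theorem blockOneKronecker_diagonal (v : ∀ i, κ i → R) :
    blockOneKronecker (fun i => diagonal (v i)) = diagonal fun a => v a.1 a.2.2 := by
  simp only [blockOneKronecker, ← diagonal_one, diagonal_kronecker_diagonal, one_mul,
    blockDiagonal'_diagonal]

variable [Fintype ι] [∀ i, Fintype (κ i)]

theorem blockOneKronecker_mul (A B : ∀ i, Matrix (κ i) (κ i) R) :
    blockOneKronecker (fun i => A i * B i) = blockOneKronecker A * blockOneKronecker B := by
  simp only [blockOneKronecker, ← blockDiagonal'_mul, ← mul_kronecker_mul, Matrix.one_mul]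

theorem trace_diagonal_mul_blockOneKronecker (u : (Σ i, κ i × κ i) → R)
    (A : ∀ i, Matrix (κ i) (κ i) R) :
    trace (diagonal u * blockOneKronecker A) = ∑ i, ∑ x, ∑ y, u ⟨i, x, y⟩ * A i y y := by
  simp [trace, diagonal_mul, Fintype.sum_sigma, Fintype.sum_prod_type]

theorem blockOneKronecker_conj_diagonal_zpow {K : Type*} [Field K]
    {P Q : ∀ i, Matrix (κ i) (κ i) K} (hPQ : ∀ i, P i * Q i = 1) (v : ∀ i, κ i → K)
    (hv : ∀ i x, v i x ≠ 0) (r : ℤ) :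
    blockOneKronecker (fun i => P i * diagonal (v i) * Q i) ^ r =
      blockOneKronecker fun i => P i * diagonal (fun x => v i x ^ r) * Q i := by
  have hPQ' : blockOneKronecker P * blockOneKronecker Q = 1 := by
    rw [← blockOneKronecker_mul, funext hPQ, blockOneKronecker_one]
  simp only [blockOneKronecker_mul, blockOneKronecker_diagonal]
  rw [conj_zpow_of_mul_eq_one hPQ',
    diagonal_zpow (fun a : Σ i, κ i × κ i => v a.1 a.2.2) fun a => hv a.1 a.2.2]

end blockOneKronecker

end Matrix

theorem trace_UrVr_eq_zero_general (m : ℕ) (n : Fin m → ℕ)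
    (d : ℕ) (hd : d = ∑ i, n i ^ 2)
    (s : Fin m → ℕ) (hs : ∀ i, s i = ∑ j ∈ Finset.univ.filter (· < i), n j ^ 2)
    (ω : ℂ) (hω : ω = Complex.exp (2 * Real.pi * Complex.I / d))
    (D : ∀ i, Matrix (Fin (n i)) (Fin (n i)) ℂ)
    (hD : ∀ i, D i = Matrix.diagonal fun x : Fin (n i) => ω ^ ((x : ℕ) * n i))
    (C : ∀ i, Matrix (Fin (n i)) (Fin (n i)) ℂ)
    (hC : ∀ i, C i = FourierMatrix (n i) *
        (Matrix.diagonal fun x : Fin (n i) => ω ^ (x : ℕ)) * (FourierMatrix (n i))ᴴ)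
    (U V : Matrix ((i : Fin m) × (Fin (n i) × Fin (n i)))
        ((i : Fin m) × (Fin (n i) × Fin (n i))) ℂ)
    (hU : U = Matrix.blockDiagonal'
        fun i => (ω ^ s i) • ((1 : Matrix (Fin (n i)) (Fin (n i)) ℂ) ⊗ₖ D i))
    (hV : V = Matrix.blockDiagonal'
        fun i => (1 : Matrix (Fin (n i)) (Fin (n i)) ℂ) ⊗ₖ C i)
    (r : ℤ) (hr : ¬ (d : ℤ) ∣ r) :
    Matrix.trace (U ^ r * V ^ r) = 0 := by
  have hω0 : ω ≠ 0 := hω ▸ Complex.exp_ne_zero _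
  have hpow : ∀ e : ℕ, (ω ^ e) ^ r = (ω ^ r) ^ e := fun e => by
    rw [← zpow_natCast, zpow_comm, zpow_natCast]
  have hUr : U ^ r = diagonal fun a => (ω ^ r) ^ (s a.1 + a.2.2 * n a.1) := by
    have hUdiag : U = diagonal fun a => ω ^ (s a.1 + a.2.2 * n a.1) := by
      simp only [hU, hD, ← diagonal_one, diagonal_kronecker_diagonal, one_mul]
      simp_rw [← diagonal_smul]
      rw [blockDiagonal'_diagonal]
      simp only [Pi.smul_apply, smul_eq_mul, pow_add]
    rw [hUdiag, diagonal_zpow _ fun _ => pow_ne_zero _ hω0]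
    simp only [hpow]
  have hVr : V ^ r = blockOneKronecker fun i => FourierMatrix (n i) *
      diagonal (fun q : Fin (n i) => (ω ^ r) ^ (q : ℕ)) * (FourierMatrix (n i))ᴴ := by
    rw [show V = blockOneKronecker C from hV, funext hC,
      blockOneKronecker_conj_diagonal_zpow (fun i => FourierMatrix_mul_conjTranspose (n i)) _
        fun _ _ => pow_ne_zero _ hω0]
    simp only [hpow]
  rw [hUr, hVr, trace_diagonal_mul_blockOneKronecker]
  simp only [FourierMatrix_mul_diagonal_mul_conjTranspose_apply_self,
    sum_fin_sum_fin_pow_mul_geom_sum_div, hs]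
  rw [sum_sum_range_add_partial_sum (fun i => n i ^ 2) ((ω ^ r) ^ ·), ← hd, hω]
  exact sum_range_pow_exp_zpow_eq_zero hr

/-- With `d = Σ nᵢ²`, `sᵢ = Σ_{j<i} nⱼ²`, `ω = exp(2πi/d)`,
`U = ⊕ᵢ ω^{sᵢ} Iₙᵢ ⊗ Dᵢ` where `Dᵢ = diag(1, ω^{nᵢ}, …, ω^{(nᵢ-1)nᵢ})`, and
`V = ⊕ᵢ Iₙᵢ ⊗ Cᵢ` where `Cᵢ = Fₙᵢ diag(1, ω, …, ω^{nᵢ-1}) Fₙᵢ*` is a circulant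
unitary, one has `tr(U^r V^r) = 0` for every integer `r` not divisible by `d`. -/
theorem trace_UrVr_eq_zero (m : ℕ) (n : Fin m → ℕ) (hn : ∀ i, 0 < n i)
    (d : ℕ) (hd : d = ∑ i, n i ^ 2)
    (s : Fin m → ℕ) (hs : ∀ i, s i = ∑ j ∈ Finset.univ.filter (· < i), n j ^ 2)
    (ω : ℂ) (hω : ω = Complex.exp (2 * Real.pi * Complex.I / d))
    (D : ∀ i, Matrix (Fin (n i)) (Fin (n i)) ℂ)
    (hD : ∀ i, D i = Matrix.diagonal fun x : Fin (n i) => ω ^ ((x : ℕ) * n i))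
    (C : ∀ i, Matrix (Fin (n i)) (Fin (n i)) ℂ)
    (hC : ∀ i, C i = FourierMatrix (n i) *
        (Matrix.diagonal fun x : Fin (n i) => ω ^ (x : ℕ)) * (FourierMatrix (n i))ᴴ)
    (U V : Matrix ((i : Fin m) × (Fin (n i) × Fin (n i)))
        ((i : Fin m) × (Fin (n i) × Fin (n i))) ℂ)
    (hU : U = Matrix.blockDiagonal'
        fun i => (ω ^ s i) • ((1 : Matrix (Fin (n i)) (Fin (n i)) ℂ) ⊗ₖ D i))
    (hV : V = Matrix.blockDiagonal'
        fun i => (1 : Matrix (Fin (n i)) (Fin (n i)) ℂ) ⊗ₖ C i)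
    (r : ℤ) (hr : ¬ (d : ℤ) ∣ r) :
    Matrix.trace (U ^ r * V ^ r) = 0 :=
  trace_UrVr_eq_zero_general m n d hd s hs ω hω D hD C hC U V hU hV r hr
end

section
/- Every finite-dimensional von Neumann algebra M = ⊕ᵢ I_{nᵢ} ⊗ M_{nᵢ}(ℂ) admits a basis consisting entirely of unitary matrices which are pairwise orthogonal under the normalized trace inner product. -/
open Matrix Kronecker Finset

/-- Membership in the block algebra `M = ⊕ᵢ I_{nᵢ} ⊗ M_{nᵢ}(ℂ)`. -/
def MemBlockAlg {m : ℕ} (n : Fin m → ℕ)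
    (A : Matrix ((i : Fin m) × (Fin (n i) × Fin (n i)))
      ((i : Fin m) × (Fin (n i) × Fin (n i))) ℂ) : Prop :=
  ∃ B : ∀ i, Matrix (Fin (n i)) (Fin (n i)) ℂ,
    A = Matrix.blockDiagonal' fun i => (1 : Matrix (Fin (n i)) (Fin (n i)) ℂ) ⊗ₖ B i

/-!
Let `ψ` be the standard character of `ZMod d`, `ψ r = exp (2πi r / d)`, and enumerate the
index triples of `M` additively: `(i, x, y) ↦ aᵢ x + bᵢ y` is a bijection onto `ZMod d`
(mixed radix `oᵢ + nᵢ x + y`). For `k : ZMod d` put into block `i` the unitary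
`Bᵢ(k) = diag (ψ (k aᵢ x)) · F diag (ψ (k bᵢ y)) F*`, where `F` is a unitary all of whose
entries have modulus `nᵢ^(-1/2)` (a normalized Fourier matrix). Then
`tr (U j * (U k)ᴴ) = ∑ᵢ nᵢ tr Bᵢ(j - k) = ∑_{(i,x,y)} ψ ((j - k)(aᵢ x + bᵢ y))`, which is the
full character sum `∑_{r : ZMod d} ψ ((j - k) r)` and vanishes for `j ≠ k`. Nonzero pairwise
orthogonal matrices are linearly independent, and there are `d = dim M` of them.
-/

open scoped ComplexOrder

lemma AddChar.apply_mul_star_apply {G : Type*} [AddCommGroup G] [Finite G] (ψ : AddChar G ℂ)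
    (a b : G) : ψ a * star (ψ b) = ψ (a - b) := by
  rw [sub_eq_add_neg, AddChar.map_add_eq_mul, AddChar.map_neg_eq_conj]
  rfl

namespace Matrix

theorem linearIndependent_of_trace_mul_conjTranspose_eq_zero {ι κ 𝕜 : Type*} [Fintype ι]
    [Fintype κ] [Field 𝕜] [PartialOrder 𝕜] [StarRing 𝕜] [StarOrderedRing 𝕜]
    {u : κ → Matrix ι ι 𝕜} (hu : ∀ k, u k ≠ 0)
    (horth : ∀ j k, j ≠ k → trace (u j * (u k)ᴴ) = 0) : LinearIndependent 𝕜 u := by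
  rw [Fintype.linearIndependent_iff]
  intro c hc j
  have hj := congrArg (fun A => trace (A * (u j)ᴴ)) hc
  simp only [Matrix.sum_mul, smul_mul_assoc, trace_sum, trace_smul, smul_eq_mul,
    Matrix.zero_mul, trace_zero] at hj
  rw [Finset.sum_eq_single j (fun k _ hk => by rw [horth k j hk, mul_zero]) (by simp)] at hj
  exact (mul_eq_zero.1 hj).resolve_right (trace_mul_conjTranspose_self_eq_zero_iff.not.2 (hu j))

section PhaseBlock

variable {ι : Type*} [Fintype ι] [DecidableEq ι] {R : Type*} [CommRing R] (ψ : AddChar R ℂ)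

def phaseDiagonal (a : ι → R) (k : R) : Matrix ι ι ℂ :=
  diagonal fun x => ψ (k * a x)

lemma phaseDiagonal_mul_conjTranspose [Finite R] (a : ι → R) (j k : R) :
    phaseDiagonal ψ a j * (phaseDiagonal ψ a k)ᴴ = phaseDiagonal ψ a (j - k) := by
  simp only [phaseDiagonal, diagonal_conjTranspose, diagonal_mul_diagonal, Pi.star_apply,
    AddChar.apply_mul_star_apply, sub_mul]

lemma conjTranspose_phaseDiagonal_mul [Finite R] (a : ι → R) (j k : R) :
    (phaseDiagonal ψ a k)ᴴ * phaseDiagonal ψ a j = phaseDiagonal ψ a (j - k) := by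
  simp only [phaseDiagonal, diagonal_conjTranspose, diagonal_mul_diagonal, Pi.star_apply,
    mul_comm (star _), AddChar.apply_mul_star_apply, sub_mul]

lemma phaseDiagonal_mem_unitaryGroup [Finite R] (a : ι → R) (k : R) :
    phaseDiagonal ψ a k ∈ unitaryGroup ι ℂ := by
  rw [mem_unitaryGroup_iff, star_eq_conjTranspose, phaseDiagonal_mul_conjTranspose, sub_self]
  simp [phaseDiagonal]

def phaseBlock (V : Matrix ι ι ℂ) (a b : ι → R) (k : R) : Matrix ι ι ℂ :=
  phaseDiagonal ψ a k * (V * phaseDiagonal ψ b k * Vᴴ)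

variable {ψ} {V : Matrix ι ι ℂ} (a b : ι → R)

lemma phaseBlock_mem_unitaryGroup [Finite R] (hV : V ∈ unitaryGroup ι ℂ) (k : R) :
    phaseBlock ψ V a b k ∈ unitaryGroup ι ℂ :=
  mul_mem (phaseDiagonal_mem_unitaryGroup ψ a k) <|
    mul_mem (mul_mem hV (phaseDiagonal_mem_unitaryGroup ψ b k)) (Unitary.star_mem hV)

lemma trace_phaseBlock_mul_conjTranspose [Finite R] (hV : V ∈ unitaryGroup ι ℂ) (j k : R) :
    trace (phaseBlock ψ V a b j * (phaseBlock ψ V a b k)ᴴ) =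
      trace (phaseBlock ψ V a b (j - k)) := by
  have hVV : Vᴴ * V = 1 := mem_unitaryGroup_iff'.1 hV
  have hW : V * phaseDiagonal ψ b j * Vᴴ * (V * phaseDiagonal ψ b k * Vᴴ)ᴴ =
      V * phaseDiagonal ψ b (j - k) * Vᴴ := by
    simp only [conjTranspose_mul, conjTranspose_conjTranspose, Matrix.mul_assoc]
    rw [← Matrix.mul_assoc Vᴴ V, hVV, Matrix.one_mul,
      ← Matrix.mul_assoc (phaseDiagonal ψ b j), phaseDiagonal_mul_conjTranspose]
  calc trace (phaseBlock ψ V a b j * (phaseBlock ψ V a b k)ᴴ)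
      = trace ((phaseDiagonal ψ a k)ᴴ * phaseDiagonal ψ a j *
          (V * phaseDiagonal ψ b j * Vᴴ * (V * phaseDiagonal ψ b k * Vᴴ)ᴴ)) := by
        rw [phaseBlock, phaseBlock, conjTranspose_mul, ← Matrix.mul_assoc, trace_mul_comm]
        simp only [Matrix.mul_assoc]
    _ = trace (phaseBlock ψ V a b (j - k)) := by
      rw [conjTranspose_phaseDiagonal_mul, hW, phaseBlock]

lemma trace_phaseBlock (hV : ∀ x y, V x y * star (V x y) = (Fintype.card ι : ℂ)⁻¹) (t : R) :
    trace (phaseBlock ψ V a b t) = (Fintype.card ι : ℂ)⁻¹ * ∑ x, ∑ y, ψ (t * (a x + b y)) := by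
  rw [phaseBlock, trace, Finset.mul_sum]
  refine sum_congr rfl fun x _ => ?_
  rw [diag_apply, phaseDiagonal, diagonal_mul, mul_apply, Finset.mul_sum, Finset.mul_sum]
  refine sum_congr rfl fun y _ => ?_
  rw [phaseDiagonal, mul_diagonal, conjTranspose_apply, mul_add, AddChar.map_add_eq_mul,
    ← hV x y]
  ring

end PhaseBlock

theorem exists_mem_unitaryGroup_mul_star_apply_eq_inv_card (ι : Type*) [Fintype ι]
    [DecidableEq ι] [Nonempty ι] :
    ∃ V ∈ unitaryGroup ι ℂ, ∀ x y, V x y * star (V x y) = (Fintype.card ι : ℂ)⁻¹ := by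
  set N := Fintype.card ι
  have : NeZero N := ⟨Fintype.card_ne_zero⟩
  let e : ι ≃ ZMod N := Fintype.equivOfCardEq (ZMod.card N).symm
  let ψ : AddChar (ZMod N) ℂ := ZMod.stdAddChar
  let c : ℂ := (Real.sqrt N : ℂ)⁻¹
  have hc : c * star c = (N : ℂ)⁻¹ := by
    simp only [c, star_inv₀, Complex.star_def, Complex.conj_ofReal, ← mul_inv,
      ← Complex.ofReal_mul, Real.mul_self_sqrt N.cast_nonneg, Complex.ofReal_natCast]
  have hentry (x y z : ι) : c * ψ (e x * e y) * star (c * ψ (e z * e y)) =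
      (N : ℂ)⁻¹ * ψ ((e x - e z) * e y) := by
    rw [star_mul', mul_mul_mul_comm, hc, AddChar.apply_mul_star_apply, sub_mul]
  refine ⟨of fun x y => c * ψ (e x * e y), ?_, fun x y => by simpa using hentry x y x⟩
  rw [mem_unitaryGroup_iff]
  ext x z
  simp only [mul_apply, star_apply, of_apply, hentry, ← Finset.mul_sum]
  rw [e.sum_comp (fun r => ψ ((e x - e z) * r))]
  simp only [mul_comm (e x - e z)]
  rw [AddChar.sum_mulShift _ (ZMod.isPrimitive_stdAddChar N)]
  by_cases hxz : x = z
  · subst hxz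
    simp [N]
  · simp [hxz, sub_eq_zero]

section Ampliation

variable {o : Type*} [Fintype o] [DecidableEq o] (κ : o → Type*) [∀ i, Fintype (κ i)]
  [∀ i, DecidableEq (κ i)] (R : Type*) [CommRing R] [StarRing R]

def blockAmpliation : (∀ i, Matrix (κ i) (κ i) R) →⋆ₐ[R]
    Matrix ((i : o) × (κ i × κ i)) ((i : o) × (κ i × κ i)) R where
  toFun B := blockDiagonal' fun i => (1 : Matrix (κ i) (κ i) R) ⊗ₖ B i
  map_one' := by simp only [Pi.one_apply, one_kronecker_one]; exact blockDiagonal'_one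
  map_mul' B C := by
    simp only [Pi.mul_apply, ← blockDiagonal'_mul, ← mul_kronecker_mul, Matrix.one_mul]
  map_zero' := by simp only [Pi.zero_apply, kronecker_zero]; exact blockDiagonal'_zero
  map_add' B C := by simp only [Pi.add_apply, kronecker_add, ← blockDiagonal'_add]; rfl
  commutes' c := by
    simp only [Algebra.algebraMap_eq_smul_one, Pi.smul_apply, Pi.one_apply, kronecker_smul,
      one_kronecker_one]
    rw [← blockDiagonal'_one]
    exact blockDiagonal'_smul c (fun i => (1 : Matrix (κ i × κ i) (κ i × κ i) R))
  map_star' B := by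
    simp only [star_eq_conjTranspose, blockDiagonal'_conjTranspose, conjTranspose_kronecker,
      conjTranspose_one, Pi.star_apply]

variable {κ R}

lemma blockAmpliation_apply (B : ∀ i, Matrix (κ i) (κ i) R) :
    blockAmpliation κ R B = blockDiagonal' fun i => (1 : Matrix (κ i) (κ i) R) ⊗ₖ B i := rfl

lemma blockAmpliation_injective [∀ i, Nonempty (κ i)] :
    Function.Injective (blockAmpliation κ R) := by
  intro B C h
  ext i x y
  obtain ⟨z⟩ : Nonempty (κ i) := inferInstance
  simpa [blockAmpliation_apply] using congrFun (congrFun h ⟨i, z, x⟩) ⟨i, z, y⟩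

lemma blockAmpliation_mem_unitaryGroup {B : ∀ i, Matrix (κ i) (κ i) R}
    (hB : ∀ i, B i ∈ unitaryGroup (κ i) R) :
    blockAmpliation κ R B ∈ unitaryGroup ((i : o) × (κ i × κ i)) R :=
  Unitary.map_mem _ <| Unitary.mem_iff.2
    ⟨funext fun i => (Unitary.mem_iff.1 (hB i)).1, funext fun i => (Unitary.mem_iff.1 (hB i)).2⟩

lemma trace_blockAmpliation (B : ∀ i, Matrix (κ i) (κ i) R) :
    trace (blockAmpliation κ R B) = ∑ i, (Fintype.card (κ i) : R) * trace (B i) := by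
  simp [blockAmpliation_apply, trace_blockDiagonal', trace_kronecker, trace_one]

lemma trace_blockAmpliation_mul_conjTranspose (B C : ∀ i, Matrix (κ i) (κ i) R) :
    trace (blockAmpliation κ R B * (blockAmpliation κ R C)ᴴ) =
      ∑ i, (Fintype.card (κ i) : R) * trace (B i * (C i)ᴴ) := by
  rw [← star_eq_conjTranspose, ← map_star, ← map_mul, trace_blockAmpliation]
  rfl

end Ampliation

end Matrix

open Matrix

theorem MemBlockAlg.mem_span_of_linearIndependent {m d : ℕ} {n : Fin m → ℕ} (hn : ∀ i, 0 < n i)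
    (hd : d = ∑ i, n i ^ 2)
    {u : Fin d → Matrix ((i : Fin m) × (Fin (n i) × Fin (n i)))
      ((i : Fin m) × (Fin (n i) × Fin (n i))) ℂ}
    (hu : ∀ k, MemBlockAlg n (u k)) (hli : LinearIndependent ℂ u) {A} (hA : MemBlockAlg n A) :
    A ∈ Submodule.span ℂ (Set.range u) := by
  have : ∀ i, Nonempty (Fin (n i)) := fun i => Fin.pos_iff_nonempty.1 (hn i)
  let Φ := (blockAmpliation (fun i => Fin (n i)) ℂ).toAlgHom.toLinearMap
  have hmem : ∀ A, MemBlockAlg n A ↔ A ∈ LinearMap.range Φ :=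
    fun A => ⟨fun ⟨B, h⟩ => ⟨B, h.symm⟩, fun ⟨B, h⟩ => ⟨B, h.symm⟩⟩
  have hle : Submodule.span ℂ (Set.range u) ≤ LinearMap.range Φ :=
    Submodule.span_le.2 (Set.range_subset_iff.2 fun k => (hmem _).1 (hu k))
  have hrank : Module.finrank ℂ (LinearMap.range Φ) ≤
      Module.finrank ℂ (Submodule.span ℂ (Set.range u)) := by
    rw [LinearMap.finrank_range_of_inj blockAmpliation_injective, finrank_span_eq_card hli,
      Module.finrank_pi_fintype]
    simp [Module.finrank_matrix, hd, sq]
  rw [Submodule.eq_of_le_of_finrank_le hle hrank]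
  exact (hmem A).1 hA

theorem exists_bijective_zmod_enumeration_add {m d : ℕ} [NeZero d] (n : Fin m → ℕ)
    (hd : d = ∑ i, n i ^ 2) :
    ∃ a b : ∀ i, Fin (n i) → ZMod d,
      Function.Bijective fun s : (i : Fin m) × (Fin (n i) × Fin (n i)) =>
        a s.1 s.2.1 + b s.1 s.2.2 := by
  let e : ((i : Fin m) × (Fin (n i) × Fin (n i))) ≃ Fin (∑ i, n i * n i) :=
    (Equiv.sigmaCongrRight fun i => finProdFinEquiv).trans finSigmaFinEquiv
  have hd' : ∑ i, n i * n i = d := by simp [hd, sq]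
  have hcast : Function.Bijective fun t : Fin d => ((t : ℕ) : ZMod d) :=
    ⟨fun s t h => Fin.ext <| by
        simpa [ZMod.val_natCast_of_lt s.2, ZMod.val_natCast_of_lt t.2] using congrArg ZMod.val h,
      fun r => ⟨⟨r.val, r.val_lt⟩, ZMod.natCast_zmod_val r⟩⟩
  refine ⟨fun i x => ((∑ j : Fin i, n (Fin.castLE i.2.le j) * n (Fin.castLE i.2.le j) +
    n i * x : ℕ) : ZMod d), fun i y => ((y : ℕ) : ZMod d), ?_⟩
  convert hcast.comp ((finCongr hd').bijective.comp e.bijective) using 1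
  funext ⟨i, x, y⟩
  simp [e, finSigmaFinEquiv_apply]
  ring

theorem exists_memBlockAlg_unitary_trace_orthogonal {m d : ℕ} [NeZero d] {n : Fin m → ℕ}
    (hn : ∀ i, 0 < n i) (hd : d = ∑ i, n i ^ 2) :
    ∃ u : Fin d → Matrix ((i : Fin m) × (Fin (n i) × Fin (n i)))
        ((i : Fin m) × (Fin (n i) × Fin (n i))) ℂ,
      (∀ k, MemBlockAlg n (u k)) ∧ (∀ k, u k ∈ unitaryGroup _ ℂ) ∧
        ∀ j k, j ≠ k → trace (u j * (u k)ᴴ) = 0 := by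
  have : ∀ i, Nonempty (Fin (n i)) := fun i => Fin.pos_iff_nonempty.1 (hn i)
  obtain ⟨a, b, hab⟩ := exists_bijective_zmod_enumeration_add n hd
  choose V hVu hVflat using
    fun i => exists_mem_unitaryGroup_mul_star_apply_eq_inv_card (Fin (n i))
  let ψ : AddChar (ZMod d) ℂ := ZMod.stdAddChar
  let U (k : ZMod d) :=
    blockAmpliation (fun i => Fin (n i)) ℂ fun i => phaseBlock ψ (V i) (a i) (b i) k
  have horth (j k : ZMod d) (hjk : j ≠ k) : trace (U j * (U k)ᴴ) = 0 := calc
    trace (U j * (U k)ᴴ) = ∑ i, ∑ x, ∑ y, ψ ((j - k) * (a i x + b i y)) := by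
      simp only [U, trace_blockAmpliation_mul_conjTranspose,
        trace_phaseBlock_mul_conjTranspose _ _ (hVu _), trace_phaseBlock _ _ (hVflat _),
        Fintype.card_fin, ← mul_assoc]
      simp [(hn _).ne']
    _ = ∑ s : (i : Fin m) × (Fin (n i) × Fin (n i)),
          ψ ((j - k) * (a s.1 s.2.1 + b s.1 s.2.2)) := by
      simp only [Fintype.sum_sigma, Fintype.sum_prod_type]
    _ = ∑ r : ZMod d, ψ (r * (j - k)) :=
      Fintype.sum_bijective _ hab _ _ fun s => by rw [mul_comm]
    _ = 0 := by
      rw [AddChar.sum_mulShift _ (ZMod.isPrimitive_stdAddChar d), if_neg (sub_ne_zero.2 hjk),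
        Nat.cast_zero]
  let e := (ZMod.finEquiv d).toEquiv
  exact ⟨fun k => U (e k), fun k => ⟨fun i => phaseBlock ψ (V i) (a i) (b i) (e k), rfl⟩,
    fun k => blockAmpliation_mem_unitaryGroup fun i => phaseBlock_mem_unitaryGroup _ _ (hVu i) _,
    fun j k hjk => horth _ _ (e.injective.ne hjk)⟩

/-- Every finite-dimensional von Neumann algebra `M = ⊕ᵢ I_{nᵢ} ⊗ M_{nᵢ}(ℂ)` admits a
basis of unitary matrices that are pairwise orthogonal under the normalized trace
inner product `⟨A,B⟩ = (1/d)tr(AB*)`, `d = Σ nᵢ²`. -/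
theorem exists_orthogonal_unitary_basis (m : ℕ) (n : Fin m → ℕ)
    (hn : ∀ i, 0 < n i) (d : ℕ) (hd : d = ∑ i, n i ^ 2) :
    ∃ u : Fin d → Matrix ((i : Fin m) × (Fin (n i) × Fin (n i)))
        ((i : Fin m) × (Fin (n i) × Fin (n i))) ℂ,
      (∀ k, MemBlockAlg n (u k)) ∧
      (∀ k, u k * (u k)ᴴ = 1) ∧
      (∀ j k, j ≠ k → (1 / (d : ℂ)) * Matrix.trace (u j * (u k)ᴴ) = 0) ∧
      LinearIndependent ℂ u ∧
      (∀ A, MemBlockAlg n A → A ∈ Submodule.span ℂ (Set.range u)) := by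
  rcases eq_zero_or_neZero d with rfl | _
  · exact ⟨finZeroElim, finZeroElim, finZeroElim, finZeroElim, linearIndependent_empty_type,
      fun _ hA => hA.mem_span_of_linearIndependent hn hd finZeroElim linearIndependent_empty_type⟩
  obtain ⟨u, hmem, hunit, horth⟩ := exists_memBlockAlg_unitary_trace_orthogonal hn hd
  have : Nonempty ((i : Fin m) × (Fin (n i) × Fin (n i))) := by
    rw [← Fintype.card_pos_iff]
    simpa [Fintype.card_sigma, ← sq, ← hd] using NeZero.pos d
  have hne (k : Fin d) : u k ≠ 0 := fun h => by simpa [h] using mem_unitaryGroup_iff.1 (hunit k)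
  have hli := linearIndependent_of_trace_mul_conjTranspose_eq_zero hne horth
  exact ⟨u, hmem, fun k => mem_unitaryGroup_iff.1 (hunit k),
    fun j k hjk => by rw [horth j k hjk, mul_zero], hli,
    fun _ hA => hA.mem_span_of_linearIndependent hn hd hmem hli⟩
end

section
/- If {x₁,...,x_n} and {y₁,...,y_n} are two orthonormal bases of a ℂ-subspace V of M_d(ℂ) with respect to the inner product ⟨A,B⟩ = tr(AB*)/d, then Σᵢ xᵢ* xᵢ = Σᵢ yᵢ* yᵢ as d×d matrices. -/
open Matrix Finset

lemma expand_aux (d n : ℕ) (hd : (d:ℂ) ≠ 0) (x : Fin n → Matrix (Fin d) (Fin d) ℂ)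
    (hxo : ∀ i j, Matrix.trace (x i * (x j)ᴴ) = if i = j then (d:ℂ) else 0)
    (m : Matrix (Fin d) (Fin d) ℂ) (hm : m ∈ Submodule.span ℂ (Set.range x)) :
    m = ∑ j, (Matrix.trace (m * (x j)ᴴ) / d) • x j := by
  induction hm using Submodule.span_induction with
  | mem m h =>
    obtain ⟨i, rfl⟩ := h
    have : ∀ j, (Matrix.trace (x i * (x j)ᴴ) / d) • x j
        = if i = j then x i else 0 := by
      intro j
      rw [hxo]
      split
      · simp [div_self hd, *]
      · simp
    simp [this]
  | zero => simp
  | add m m' _ _ ih ih' =>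
    nth_rewrite 1 [ih, ih']
    rw [← Finset.sum_add_distrib]
    congr 1; ext j
    rw [← add_smul, Matrix.add_mul, Matrix.trace_add, add_div]
  | smul c m _ ih =>
    nth_rewrite 1 [ih]
    rw [Finset.smul_sum]
    congr 1; ext j
    rw [smul_smul, Matrix.smul_mul, Matrix.trace_smul, smul_eq_mul, mul_div_assoc]

/-- If `{x₁,…,xₙ}` and `{y₁,…,yₙ}` are two orthonormal bases of a ℂ-subspace `V` of
`M_d(ℂ)` with respect to `⟨A,B⟩ = tr(AB*)/d`, then `Σᵢ xᵢ* xᵢ = Σᵢ yᵢ* yᵢ`. -/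
theorem sum_conjTranspose_mul_eq_of_orthonormal_bases (d : ℕ)
    (V : Submodule ℂ (Matrix (Fin d) (Fin d) ℂ)) (n : ℕ)
    (x y : Fin n → Matrix (Fin d) (Fin d) ℂ)
    (hxV : ∀ i, x i ∈ V) (hyV : ∀ i, y i ∈ V)
    (hxo : ∀ i j, Matrix.trace (x i * (x j)ᴴ) / d = if i = j then 1 else 0)
    (hyo : ∀ i j, Matrix.trace (y i * (y j)ᴴ) / d = if i = j then 1 else 0)
    (hxs : V ≤ Submodule.span ℂ (Set.range x))
    (hys : V ≤ Submodule.span ℂ (Set.range y)) :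
    ∑ i, (x i)ᴴ * x i = ∑ i, (y i)ᴴ * y i := by
  rcases Nat.eq_zero_or_pos d with hd0 | hd0
  · subst hd0
    ext i j
    exact absurd i.isLt (Nat.not_lt_zero _)
  have hd : (d : ℂ) ≠ 0 := Nat.cast_ne_zero.mpr hd0.ne'
  -- orthonormality in trace form
  have hxo' : ∀ i j, Matrix.trace (x i * (x j)ᴴ) = if i = j then (d:ℂ) else 0 := by
    intro i j
    have := hxo i j
    rw [div_eq_iff hd] at this
    rw [this]
    split <;> simp
  have hyo' : ∀ i j, Matrix.trace (y i * (y j)ᴴ) = if i = j then (d:ℂ) else 0 := by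
    intro i j
    have := hyo i j
    rw [div_eq_iff hd] at this
    rw [this]
    split <;> simp
  set a : Fin n → Fin n → ℂ := fun i j => Matrix.trace (y i * (x j)ᴴ) / d with ha
  set b : Fin n → Fin n → ℂ := fun j i => Matrix.trace (x j * (y i)ᴴ) / d with hb
  have hy_exp : ∀ i, y i = ∑ j, a i j • x j := fun i =>
    expand_aux d n hd x hxo' (y i) (hxs (hyV i))
  have hx_exp : ∀ j, x j = ∑ i, b j i • y i := fun j =>
    expand_aux d n hd y hyo' (x j) (hys (hxV j))
  have hconj : ∀ i j, b j i = (starRingEnd ℂ) (a i j) := by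
    intro i j
    have : Matrix.trace (x j * (y i)ᴴ) = star (Matrix.trace (y i * (x j)ᴴ)) := by
      rw [← Matrix.trace_conjTranspose, Matrix.conjTranspose_mul,
        Matrix.conjTranspose_conjTranspose]
    simp [ha, hb, this, map_div₀]
  have key : ∀ j k, ∑ i, (starRingEnd ℂ) (a i j) * a i k = if j = k then 1 else 0 := by
    intro j k
    have h1 : Matrix.trace (x j * (x k)ᴴ) = ∑ i, b j i * (d * a i k) := by
      nth_rewrite 1 [hx_exp j]
      rw [Matrix.sum_mul, Matrix.trace_sum]
      congr 1; ext i
      rw [Matrix.smul_mul, Matrix.trace_smul, smul_eq_mul]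
      congr 1
      rw [ha]
      field_simp
    rw [hxo'] at h1
    have h2 : ∑ i, b j i * ((d:ℂ) * a i k) = d * ∑ i, b j i * a i k := by
      rw [Finset.mul_sum]; congr 1; ext i; ring
    rw [h2] at h1
    have h3 : ∑ i, b j i * a i k = if j = k then 1 else 0 := by
      apply mul_left_cancel₀ hd
      rw [← h1]
      split <;> simp
    rw [← h3]
    congr 1; ext i
    rw [hconj]
  calc ∑ i, (x i)ᴴ * x i
      = ∑ j, ∑ k, (if j = k then (1:ℂ) else 0) • ((x j)ᴴ * x k) := by
        congr 1; ext j
        simp [ite_smul]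
    _ = ∑ j, ∑ k, (∑ i, (starRingEnd ℂ) (a i j) * a i k) • ((x j)ᴴ * x k) := by
        simp only [key]
    _ = ∑ i, (y i)ᴴ * y i := by
        have hyy : ∀ i, (y i)ᴴ * y i
            = ∑ j, ∑ k, ((starRingEnd ℂ) (a i j) * a i k) • ((x j)ᴴ * x k) := by
          intro i
          rw [hy_exp i, Matrix.conjTranspose_sum, Finset.sum_mul]
          refine Finset.sum_congr rfl fun j _ => ?_
          rw [Matrix.mul_sum]
          refine Finset.sum_congr rfl fun k _ => ?_
          rw [Matrix.conjTranspose_smul, Matrix.smul_mul, Matrix.mul_smul, smul_smul]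
          rfl
        symm
        calc ∑ i, (y i)ᴴ * y i
            = ∑ i, ∑ j, ∑ k, ((starRingEnd ℂ) (a i j) * a i k) • ((x j)ᴴ * x k) :=
              Finset.sum_congr rfl fun i _ => hyy i
          _ = ∑ j, ∑ i, ∑ k, ((starRingEnd ℂ) (a i j) * a i k) • ((x j)ᴴ * x k) :=
              Finset.sum_comm
          _ = ∑ j, ∑ k, ∑ i, ((starRingEnd ℂ) (a i j) * a i k) • ((x j)ᴴ * x k) :=
              Finset.sum_congr rfl fun j _ => Finset.sum_comm
          _ = ∑ j, ∑ k, (∑ i, (starRingEnd ℂ) (a i j) * a i k) • ((x j)ᴴ * x k) :=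
              Finset.sum_congr rfl fun j _ => Finset.sum_congr rfl fun k _ =>
                (Finset.sum_smul).symm
end
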